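/- Let X be a compact subset of a Banach space, x, y ∈ X with x ≠ y, R > 4 with ‖x − y‖ ≤ R/4, and suppose Φ is δ-almost bi-Lipschitz on X with constant C (δ > 1), with ‖Φx − Φy‖ ≤ r where 0 < r < R/4. Then ‖x − y‖ ≤ C_R · r · slog(r)^δ for a constant C_R depending only on C, δ, R. -/
import Mathlib


/-- The symmetric logarithm. -/
noncomputable def slog (x : ℝ) : ℝ := Real.log (x + 1/x)

lemma two_le_self_add_inv {x : ℝ} (hx : 0 < x) : 2 ≤ x + 1/x := by
  rw [← sub_nonneg]
  have heq : x + 1/x - 2 = (x - 1)^2 / x := by field_simp; ring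
  rw [heq]; positivity

lemma log_two_le_slog {x : ℝ} (hx : 0 < x) : Real.log 2 ≤ slog x :=
  Real.log_le_log two_pos (two_le_self_add_inv hx)

lemma slog_pos {x : ℝ} (hx : 0 < x) : 0 < slog x :=
  lt_of_lt_of_le (Real.log_pos (by norm_num)) (log_two_le_slog hx)

lemma slog_anti {a b : ℝ} (ha : 0 < a) (hab : a ≤ b) (hb : b ≤ 1) :
    slog b ≤ slog a := by
  have hb0 : 0 < b := lt_of_lt_of_le ha hab
  apply Real.log_le_log (by positivity)
  have h1 : a * b ≤ 1 := by nlinarith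
  rw [← sub_nonneg]
  have heq : a + 1/a - (b + 1/b) = ((b - a) * (1 - a*b)) / (a*b) := by
    field_simp; ring
  rw [heq]
  apply div_nonneg _ (by positivity)
  nlinarith

lemma slog_mono {a b : ℝ} (ha : 1 ≤ a) (hab : a ≤ b) : slog a ≤ slog b := by
  have ha0 : 0 < a := lt_of_lt_of_le one_pos ha
  have hb0 : 0 < b := lt_of_lt_of_le ha0 hab
  apply Real.log_le_log (by positivity)
  have h1 : 1 ≤ a * b := by nlinarith
  rw [← sub_nonneg]
  have heq : b + 1/b - (a + 1/a) = ((b - a) * (a*b - 1)) / (a*b) := by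
    field_simp; ring
  rw [heq]
  apply div_nonneg _ (by positivity)
  nlinarith

theorem small_image_implies_small_difference
    {B B' : Type*} [NormedAddCommGroup B] [NormedSpace ℝ B] [CompleteSpace B]
    [NormedAddCommGroup B'] [NormedSpace ℝ B'] [CompleteSpace B']
    (X : Set B) (hX : IsCompact X) (Φ : B →L[ℝ] B') (δ C R : ℝ)
    (hδ : 1 < δ) (hC : 0 < C) (hR : 4 < R)
    (hbil : ∀ x ∈ X, ∀ y ∈ X, x ≠ y →
      (1/C) * ‖x - y‖ / slog ‖x - y‖ ^ δ ≤ ‖Φ x - Φ y‖ ∧ ‖Φ x - Φ y‖ ≤ C * ‖x - y‖) :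
    ∃ CR : ℝ, 0 < CR ∧
      ∀ x ∈ X, ∀ y ∈ X, x ≠ y → ‖x - y‖ ≤ R/4 →
        ∀ r : ℝ, 0 < r → r < R/4 → ‖Φ x - Φ y‖ ≤ r →
          ‖x - y‖ ≤ CR * r * slog r ^ δ := by
  have hlog2 : (0:ℝ) < Real.log 2 := Real.log_pos (by norm_num)
  have hR4 : (1:ℝ) < R/4 := by linarith
  have hslogR : Real.log 2 ≤ slog (R/4) := log_two_le_slog (by linarith)
  set K : ℝ := slog (R/4) / Real.log 2 with hKdef
  have hK : 1 ≤ K := (one_le_div hlog2).2 hslogR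
  have hK0 : 0 < K := lt_of_lt_of_le one_pos hK
  have hδ0 : (0:ℝ) ≤ δ := by linarith
  refine ⟨max ((Real.log 2) ^ (-δ)) (C * K ^ δ), ?_, ?_⟩
  · exact lt_max_of_lt_left (Real.rpow_pos_of_pos hlog2 _)
  intro x hx y hy hne hle r hr hrR hΦ
  set CR : ℝ := max ((Real.log 2) ^ (-δ)) (C * K ^ δ) with hCRdef
  have hn : 0 < ‖x - y‖ := norm_pos_iff.mpr (sub_ne_zero.mpr hne)
  have hsr : Real.log 2 ≤ slog r := log_two_le_slog hr
  have hsrpos : 0 < slog r := slog_pos hr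
  have hsrp : (0:ℝ) ≤ slog r ^ δ := (Real.rpow_pos_of_pos hsrpos δ).le
  rcases le_or_gt ‖x - y‖ r with h | h
  · -- easy case: the norm is already ≤ r
    have h1 : (1:ℝ) ≤ (slog r / Real.log 2) ^ δ := by
      calc (1:ℝ) = 1 ^ δ := (Real.one_rpow δ).symm
        _ ≤ (slog r / Real.log 2) ^ δ :=
          Real.rpow_le_rpow zero_le_one ((one_le_div hlog2).2 hsr) hδ0
    have heq : (Real.log 2) ^ (-δ) * slog r ^ δ = (slog r / Real.log 2) ^ δ := by
      rw [Real.div_rpow hsrpos.le hlog2.le, Real.rpow_neg hlog2.le]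
      ring
    have hCR1 : 1 ≤ CR * slog r ^ δ := by
      calc (1:ℝ) ≤ (slog r / Real.log 2) ^ δ := h1
        _ = (Real.log 2) ^ (-δ) * slog r ^ δ := heq.symm
        _ ≤ CR * slog r ^ δ := by
            apply mul_le_mul_of_nonneg_right (le_max_left _ _) hsrp
    calc ‖x - y‖ ≤ r := h
      _ = r * 1 := (mul_one r).symm
      _ ≤ r * (CR * slog r ^ δ) := by
          apply mul_le_mul_of_nonneg_left hCR1 hr.le
      _ = CR * r * slog r ^ δ := by ring
  · -- hard case: use the lower bi-Lipschitz bound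
    obtain ⟨hlow, _⟩ := hbil x hx y hy hne
    have hsn : 0 < slog ‖x - y‖ := slog_pos hn
    have hsnp : 0 < slog ‖x - y‖ ^ δ := Real.rpow_pos_of_pos hsn δ
    have hkey : ‖x - y‖ ≤ C * r * slog ‖x - y‖ ^ δ := by
      have h2 : (1/C) * ‖x - y‖ / slog ‖x - y‖ ^ δ ≤ r := le_trans hlow hΦ
      have h3 : (1/C) * ‖x - y‖ ≤ r * slog ‖x - y‖ ^ δ :=
        (div_le_iff₀ hsnp).mp h2
      calc ‖x - y‖ = C * ((1/C) * ‖x - y‖) := by field_simp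
        _ ≤ C * (r * slog ‖x - y‖ ^ δ) := by
            apply mul_le_mul_of_nonneg_left h3 hC.le
        _ = C * r * slog ‖x - y‖ ^ δ := by ring
    have hsnK : slog ‖x - y‖ ≤ K * slog r := by
      rcases le_or_gt ‖x - y‖ 1 with h1 | h1
      · calc slog ‖x - y‖ ≤ slog r := slog_anti hr h.le h1
          _ = 1 * slog r := (one_mul _).symm
          _ ≤ K * slog r := mul_le_mul_of_nonneg_right hK hsrpos.le
      · calc slog ‖x - y‖ ≤ slog (R/4) := slog_mono h1.le hle
          _ = K * Real.log 2 := (div_mul_cancel₀ _ hlog2.ne').symm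
          _ ≤ K * slog r := mul_le_mul_of_nonneg_left hsr hK0.le
    have hpow : slog ‖x - y‖ ^ δ ≤ K ^ δ * slog r ^ δ := by
      calc slog ‖x - y‖ ^ δ ≤ (K * slog r) ^ δ :=
            Real.rpow_le_rpow hsn.le hsnK hδ0
        _ = K ^ δ * slog r ^ δ := Real.mul_rpow hK0.le hsrpos.le
    calc ‖x - y‖ ≤ C * r * slog ‖x - y‖ ^ δ := hkey
      _ ≤ C * r * (K ^ δ * slog r ^ δ) := by
          apply mul_le_mul_of_nonneg_left hpow (by positivity)
      _ = (C * K ^ δ) * r * slog r ^ δ := by ring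
      _ ≤ CR * r * slog r ^ δ := by
          apply mul_le_mul_of_nonneg_right
            (mul_le_mul_of_nonneg_right (le_max_right _ _) hr.le) hsrp
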